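/- Let n ≥ 1. The matrix r_{n+1} is invertible and its inverse equals (1/2^n) · r_{n+1}^T; equivalently, r_{n+1} · r_{n+1}^T = 2^n · I, where I is the 2^n × 2^n identity matrix. -/

import Mathlib

/-!
Column `i` of `r_{n+1}` is the Walsh character `j ↦ (-1) ^ ⟨j, gray i⟩` of the reflected
Gray code `gray i = i ^^^ ⌊i / 2⌋`: passing from column `i` to `i + 1` multiplies by
`v_{A(i)}`, the character of the single bit `n - A(i)`, and the binary-tree sequence lists
exactly the bits flipped by the Gray code.  As `gray` permutes `{0, …, 2^n - 1}`, the rows of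
`r_{n+1}` are orthogonal by orthogonality of the characters of `(ℤ/2)^n`.
-/

open Matrix

noncomputable section

/-- Kronecker product of square matrices with flat `Fin` indexing
(first factor most significant: `(A ⊗ B)[i*b+r, j*b+s] = A[i,j] * B[r,s]`). -/
def kron {R : Type*} [Mul R] {a b : ℕ} (A : Matrix (Fin a) (Fin a) R)
    (B : Matrix (Fin b) (Fin b) R) : Matrix (Fin (a * b)) (Fin (a * b)) R := fun i j =>
  have hb : 0 < b := Nat.pos_of_ne_zero fun hb0 => by
    subst hb0; exact absurd i.isLt (by omega)
  A ⟨i.val / b, Nat.div_lt_of_lt_mul (Nat.mul_comm a b ▸ i.isLt)⟩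
    ⟨j.val / b, Nat.div_lt_of_lt_mul (Nat.mul_comm a b ▸ j.isLt)⟩ *
  B ⟨i.val % b, Nat.mod_lt _ hb⟩ ⟨j.val % b, Nat.mod_lt _ hb⟩

/-- Kronecker product of (column) vectors with flat `Fin` indexing. -/
def kronV {R : Type*} [Mul R] {a b : ℕ} (u : Fin a → R) (v : Fin b → R) :
    Fin (a * b) → R := fun i =>
  have hb : 0 < b := Nat.pos_of_ne_zero fun hb0 => by
    subst hb0; exact absurd i.isLt (by omega)
  u ⟨i.val / b, Nat.div_lt_of_lt_mul (Nat.mul_comm a b ▸ i.isLt)⟩ *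
  v ⟨i.val % b, Nat.mod_lt _ hb⟩

/-- Transport a square matrix along an equality of sizes. -/
def castM {R : Type*} {a b : ℕ} (h : a = b) (A : Matrix (Fin a) (Fin a) R) :
    Matrix (Fin b) (Fin b) R := fun i j => A (Fin.cast h.symm i) (Fin.cast h.symm j)

/-- Transport a vector along an equality of sizes. -/
def castV {R : Type*} {a b : ℕ} (h : a = b) (u : Fin a → R) : Fin b → R :=
  fun i => u (Fin.cast h.symm i)

theorem two_pow_pred_mul_two {n : ℕ} (hn : 1 ≤ n) : 2 ^ (n - 1) * 2 = 2 ^ n := by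
  rw [← pow_succ]; congr 1; omega

theorem half_lt {n x : ℕ} (hx : x < 2 ^ n) : x / 2 < 2 ^ (n - 1) := by
  rcases Nat.eq_zero_or_pos n with h | h
  · subst h; simp only [pow_zero] at hx ⊢; omega
  · have h2 : (2 : ℕ) ^ (n - 1) * 2 = 2 ^ n := two_pow_pred_mul_two h
    omega

/-- `⌊j/2⌋` as an element of `Fin (2^(n-1))`. -/
def half {n : ℕ} (j : Fin (2 ^ n)) : Fin (2 ^ (n - 1)) := ⟨j.val / 2, half_lt j.isLt⟩

/-- The index `2i` (1-indexed: `2i-1`). -/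
def dbl {n : ℕ} (hn : 1 ≤ n) (i : Fin (2 ^ (n - 1))) : Fin (2 ^ n) :=
  ⟨2 * i.val, by
    have h1 := i.isLt
    have h2 : (2 : ℕ) ^ (n - 1) * 2 = 2 ^ n := two_pow_pred_mul_two hn
    omega⟩

/-- The index `2i+1` (1-indexed: `2i`). -/
def dbl1 {n : ℕ} (hn : 1 ≤ n) (i : Fin (2 ^ (n - 1))) : Fin (2 ^ n) :=
  ⟨2 * i.val + 1, by
    have h1 := i.isLt
    have h2 : (2 : ℕ) ^ (n - 1) * 2 = 2 ^ n := two_pow_pred_mul_two hn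
    omega⟩

/-- The identity matrix `I_m` over `ℂ`. -/
def idM (m : ℕ) : Matrix (Fin m) (Fin m) ℂ := 1

/-- The 2×2 identity matrix `I_2`. -/
def I2 : Matrix (Fin 2) (Fin 2) ℂ := 1

/-- The Pauli matrix `X = [[0,1],[1,0]]`. -/
def pauliX : Matrix (Fin 2) (Fin 2) ℂ := !![0, 1; 1, 0]

/-- The projector `π₀ = [[1,0],[0,0]]`. -/
def proj0 : Matrix (Fin 2) (Fin 2) ℂ := !![1, 0; 0, 0]

/-- The projector `π₁ = [[0,0],[0,1]]`. -/
def proj1 : Matrix (Fin 2) (Fin 2) ℂ := !![0, 0; 0, 1]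

/-- `D₁(φ) = diag(e^{iφ}, e^{-iφ})`. -/
def D1 (φ : ℝ) : Matrix (Fin 2) (Fin 2) ℂ :=
  !![Complex.exp (Complex.I * (φ : ℂ)), 0; 0, Complex.exp (-(Complex.I * (φ : ℂ)))]

/-- `D_m(α) = diag(e^{iα₁}, …, e^{iα_{2^m}})`. -/
def Dm (m : ℕ) (α : Fin (2 ^ m) → ℝ) : Matrix (Fin (2 ^ m)) (Fin (2 ^ m)) ℂ :=
  Matrix.diagonal fun j => Complex.exp (Complex.I * (α j : ℂ))

/-- The control matrix
`L(k) = I^{⊗(k-1)} ⊗ π₀ ⊗ I^{⊗(n-k)} + I^{⊗(k-1)} ⊗ π₁ ⊗ I^{⊗(n-k-1)} ⊗ X`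
(defined to be the identity for `k` outside `{1,…,n-1}`). -/
def Lmat (n k : ℕ) : Matrix (Fin (2 ^ n)) (Fin (2 ^ n)) ℂ :=
  if h : 1 ≤ k ∧ k < n then
    castM (by rw [← pow_succ, ← pow_add]; congr 1; omega)
      (kron (kron (idM (2 ^ (k - 1))) proj0) (idM (2 ^ (n - k)))) +
    castM (by rw [← pow_succ, ← pow_add, ← pow_succ]; congr 1; omega)
      (kron (kron (kron (idM (2 ^ (k - 1))) proj1) (idM (2 ^ (n - k - 1)))) pauliX)
  else 1

/-- The half of the binary-tree sequence: `a_2 = (1)`,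
`a_m = (a_{m-1}+1) ∘ (1) ∘ (a_{m-1}+1)`. -/
def aSeq : ℕ → List ℕ
  | 0 => []
  | 1 => []
  | 2 => [1]
  | n + 3 => ((aSeq (n + 2)).map (· + 1)) ++ [1] ++ ((aSeq (n + 2)).map (· + 1))

/-- The binary-tree sequence `A_n = a_n ∘ (1)`. -/
def ASeq (n : ℕ) : List ℕ := aSeq n ++ [1]

/-- The all-ones vector `[1,1]^{⊗k}` (of arbitrary length). -/
def onesV (m : ℕ) : Fin m → ℝ := fun _ => 1

/-- The vector `[1,-1]`. -/
def signV : Fin 2 → ℝ := ![1, -1]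

/-- `v_m = [1,1]^{⊗(m-1)} ⊗ [1,-1] ⊗ [1,1]^{⊗(n-1-m)}`
(defined to be all-ones for `m` outside `{1,…,n-1}`). -/
def vvec (n m : ℕ) : Fin (2 ^ (n - 1)) → ℝ :=
  if h : 1 ≤ m ∧ m ≤ n - 1 then
    castV (by rw [← pow_succ, ← pow_add]; congr 1; omega)
      (kronV (kronV (onesV (2 ^ (m - 1))) signV) (onesV (2 ^ (n - 1 - m))))
  else onesV _

/-- The matrix `r_n`: its `i`-th column is the entrywise product
`∏_{k=1}^{i-1} v_{A_n(k)}`.  (`rMat n j i` is the `(j,i)` entry, `i` the column.) -/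
def rMat (n : ℕ) : Matrix (Fin (2 ^ (n - 1))) (Fin (2 ^ (n - 1))) ℝ :=
  fun j i => ∏ k ∈ Finset.range i.val, vvec n ((ASeq n).getD k 1) j

/-- `r_2 = [[1,1],[1,-1]]`. -/
def r2 : Matrix (Fin 2) (Fin 2) ℝ := !![1, 1; 1, -1]

/-- The `m`-fold Kronecker power `r_2^{⊗m}`. -/
def r2pow : (m : ℕ) → Matrix (Fin (2 ^ m)) (Fin (2 ^ m)) ℝ
  | 0 => 1
  | m + 1 => castM (pow_succ 2 m).symm (kron (r2pow m) r2)

/-- The block-diagonal matrix with 2×2 blocks `D₁(γ₁), …, D₁(γ_{2^{n-1}})`. -/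
def blockD1 (n : ℕ) (γ : Fin (2 ^ (n - 1)) → ℝ) :
    Matrix (Fin (2 ^ n)) (Fin (2 ^ n)) ℂ := fun x y =>
  if x.val / 2 = y.val / 2 then
    D1 (γ (half x)) ⟨x.val % 2, Nat.mod_lt _ (by norm_num)⟩
      ⟨y.val % 2, Nat.mod_lt _ (by norm_num)⟩
  else 0

open Finset

theorem two_pow_add_eq_xor {n x : ℕ} (hx : x < 2 ^ n) : 2 ^ n + x = 2 ^ n ^^^ x := by
  refine Nat.eq_of_testBit_eq fun i => ?_
  have hbit := Nat.testBit_two_pow_mul_add 1 hx i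
  rw [mul_one] at hbit
  rw [hbit, Nat.testBit_xor, Nat.testBit_two_pow]
  split_ifs with hi
  · simp [hi.ne']
  · rw [Nat.testBit_lt_two_pow (hx.trans_le (Nat.pow_le_pow_right two_pos (not_lt.1 hi))),
      Bool.xor_false, Bool.eq_iff_iff, Nat.testBit_one_eq_true_iff_self_eq_zero,
      decide_eq_true_iff]
    omega

def walsh (n a x : ℕ) : ℝ :=
  ∏ q ∈ range n, if a.testBit q && x.testBit q then -1 else 1

theorem walsh_comm (n a x : ℕ) : walsh n a x = walsh n x a := by
  simp only [walsh, Bool.and_comm]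

theorem walsh_xor_right (n a x y : ℕ) : walsh n a (x ^^^ y) = walsh n a x * walsh n a y := by
  rw [walsh, walsh, walsh, ← prod_mul_distrib]
  refine prod_congr rfl fun q _ => ?_
  rw [Nat.testBit_xor]
  cases a.testBit q <;> cases x.testBit q <;> cases y.testBit q <;> norm_num

theorem walsh_xor_left (n a b x : ℕ) : walsh n (a ^^^ b) x = walsh n a x * walsh n b x := by
  simp only [walsh_comm n _ x, walsh_xor_right]

theorem walsh_zero_left (n x : ℕ) : walsh n 0 x = 1 := by
  simp [walsh]

theorem walsh_two_pow {n q : ℕ} (a : ℕ) (hq : q < n) :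
    walsh n a (2 ^ q) = if a.testBit q then -1 else 1 := by
  rw [walsh, prod_eq_single_of_mem q (mem_range.2 hq)]
  · simp
  · intro p _ hpq
    simp [Ne.symm hpq]

theorem sum_walsh {n a : ℕ} (ha : a < 2 ^ n) :
    ∑ x ∈ range (2 ^ n), walsh n a x = if a = 0 then (2 ^ n : ℝ) else 0 := by
  split_ifs with ha0
  · simp [ha0, walsh_zero_left]
  -- `x ↦ x ^^^ 2 ^ q`, for a bit `q` of `a`, pairs off terms of opposite sign.
  obtain ⟨q, hq⟩ := Nat.exists_testBit_of_ne_zero ha0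
  have hqn : q < n := by
    by_contra! hnq
    rw [Nat.testBit_lt_two_pow (ha.trans_le (Nat.pow_le_pow_right two_pos hnq))] at hq
    exact Bool.false_ne_true hq
  have hflip (x : ℕ) : walsh n a (x ^^^ 2 ^ q) = -walsh n a x := by
    rw [walsh_xor_right, walsh_two_pow a hqn, if_pos hq, mul_neg_one]
  refine sum_involution (fun x _ => x ^^^ 2 ^ q) (fun x _ => by rw [hflip, add_neg_cancel])
    (fun x _ _ => ?_) (fun x hx => ?_) (fun x _ => xor_cancel_right x _)
  · simp
  · exact mem_range.2 (Nat.xor_lt_two_pow (mem_range.1 hx) (Nat.pow_lt_pow_right one_lt_two hqn))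

theorem sum_walsh_mul_walsh {n a b : ℕ} (ha : a < 2 ^ n) (hb : b < 2 ^ n) :
    ∑ x ∈ range (2 ^ n), walsh n a x * walsh n b x = if a = b then (2 ^ n : ℝ) else 0 := by
  simp only [← walsh_xor_left, sum_walsh (Nat.xor_lt_two_pow ha hb), xor_eq_zero_iff]

def gray (k : ℕ) : ℕ := k ^^^ k / 2

theorem gray_xor (a b : ℕ) : gray (a ^^^ b) = gray a ^^^ gray b := by
  rw [gray, gray, gray, Nat.xor_div_two]
  ac_rfl

theorem gray_eq_zero_iff {k : ℕ} : gray k = 0 ↔ k = 0 := by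
  refine ⟨fun h => ?_, fun h => by simp [h, gray]⟩
  have : k = k / 2 := xor_eq_zero_iff.1 h
  omega

theorem gray_injective : Function.Injective gray := fun a b h => by
  rwa [← xor_eq_zero_iff, ← gray_xor, gray_eq_zero_iff, xor_eq_zero_iff] at *

theorem gray_lt {n k : ℕ} (hk : k < 2 ^ n) : gray k < 2 ^ n :=
  Nat.xor_lt_two_pow hk ((Nat.div_le_self k 2).trans_lt hk)

theorem sum_range_comp_gray {M : Type*} [AddCommMonoid M] (n : ℕ) (f : ℕ → M) :
    ∑ i ∈ range (2 ^ n), f (gray i) = ∑ i ∈ range (2 ^ n), f i := by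
  have hmaps : Set.MapsTo gray (range (2 ^ n)) (range (2 ^ n)) := fun i hi =>
    mem_range.2 (gray_lt (mem_range.1 hi))
  exact sum_nbij gray hmaps gray_injective.injOn
    (surjOn_of_injOn_of_card_le _ hmaps gray_injective.injOn le_rfl) fun _ _ => rfl

theorem gray_two_pow_sub_one_xor_gray_two_pow (n : ℕ) :
    gray (2 ^ n - 1) ^^^ gray (2 ^ n) = 2 ^ n := by
  have hpos := Nat.two_pow_pos n
  have hhalf : (2 ^ n ^^^ (2 ^ n - 1)) / 2 = 2 ^ n - 1 := by
    rw [← two_pow_add_eq_xor (by omega)]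
    omega
  rw [← gray_xor, Nat.xor_comm, gray, hhalf, xor_cancel_right]

theorem aSeq_add_two (n : ℕ) :
    aSeq (n + 2) = (aSeq (n + 1)).map (· + 1) ++ [1] ++ (aSeq (n + 1)).map (· + 1) := by
  cases n <;> rfl

theorem length_aSeq (n : ℕ) : (aSeq (n + 1)).length = 2 ^ n - 1 := by
  induction n with
  | zero => rfl
  | succ n ih =>
    rw [aSeq_add_two, List.length_append, List.length_append, List.length_map,
      List.length_singleton, ih, pow_succ]
    have := Nat.two_pow_pos n
    omega

theorem mem_aSeq {n m : ℕ} (hm : m ∈ aSeq (n + 1)) : 1 ≤ m ∧ m ≤ n := by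
  induction n generalizing m with
  | zero => simp [aSeq] at hm
  | succ n ih =>
    rw [aSeq_add_two] at hm
    simp only [List.mem_append, List.mem_map, List.mem_singleton] at hm
    rcases hm with (⟨m, hm, rfl⟩ | rfl) | ⟨m, hm, rfl⟩
    · have := ih hm; omega
    · omega
    · have := ih hm; omega

/-- The middle term of `a_{n+2}` flips the top bit; since `gray (2 ^ n ^^^ j) =
gray (2 ^ n) ^^^ gray j`, the second half repeats the flips of the first. -/
theorem gray_xor_gray_succ {n k : ℕ} (hk : k < (aSeq (n + 1)).length) :
    gray k ^^^ gray (k + 1) = 2 ^ (n - (aSeq (n + 1))[k]) := by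
  induction n generalizing k with
  | zero => simp [aSeq] at hk
  | succ n ih =>
    have hlen := length_aSeq n
    have hpos := Nat.two_pow_pos n
    have hk' : k < 2 ^ (n + 1) - 1 := length_aSeq (n + 1) ▸ hk
    rw [pow_succ] at hk'
    simp only [aSeq_add_two, List.getElem_append, List.getElem_map, List.length_append,
      List.length_map, List.length_singleton, hlen]
    split_ifs with hmid hleft
    · rw [Nat.add_sub_add_right, ih]
    · obtain rfl : k = 2 ^ n - 1 := by omega
      rw [List.getElem_singleton, Nat.sub_add_cancel hpos, gray_two_pow_sub_one_xor_gray_two_pow,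
        Nat.add_sub_cancel]
    · obtain ⟨j, rfl⟩ : ∃ j, k = 2 ^ n + j := ⟨k - 2 ^ n, by omega⟩
      have hj : j < (aSeq (n + 1)).length := by omega
      simp only [show 2 ^ n + j - (2 ^ n - 1 + 1) = j by omega]
      rw [Nat.add_sub_add_right, ← ih hj,
        add_assoc, two_pow_add_eq_xor (by omega), two_pow_add_eq_xor (by omega), gray_xor,
        gray_xor, Nat.xor_comm (gray _), Nat.xor_assoc, xor_cancel_left]

theorem ASeq_getD_eq_getElem {n k : ℕ} (hk : k < (aSeq n).length) :
    (ASeq n).getD k 1 = (aSeq n)[k] := by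
  rw [ASeq, List.getD_eq_getElem?_getD, List.getElem?_append_left hk, List.getElem?_eq_getElem hk,
    Option.getD_some]

theorem vvec_succ_eq_walsh {n m : ℕ} (h1 : 1 ≤ m) (h2 : m ≤ n) (j : Fin (2 ^ n)) :
    vvec (n + 1) m j = walsh n j (2 ^ (n - m)) := by
  rw [walsh_two_pow _ (by omega), vvec, dif_pos ⟨h1, by omega⟩]
  simp only [castV, kronV, onesV, one_mul, mul_one, Fin.val_cast,
    show n + 1 - 1 - m = n - m by omega]
  rcases Nat.mod_two_eq_zero_or_one (j / 2 ^ (n - m)) with h | h <;>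
    simp [signV, h, Nat.testBit_eq_decide_div_mod_eq]

theorem rMat_succ_apply {n : ℕ} (j i : Fin (2 ^ n)) : rMat (n + 1) j i = walsh n j (gray i) := by
  suffices h : ∀ c < 2 ^ n,
      ∏ k ∈ range c, vvec (n + 1) ((ASeq (n + 1)).getD k 1) j = walsh n j (gray c) from h i i.2
  intro c hc
  induction c with
  | zero => rw [prod_range_zero, walsh_comm, show gray 0 = 0 from rfl, walsh_zero_left]
  | succ c ih =>
    have hc' : c < (aSeq (n + 1)).length := by rw [length_aSeq]; omega
    obtain ⟨h1, h2⟩ := mem_aSeq (List.getElem_mem hc')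
    rw [prod_range_succ, ih (by omega), ASeq_getD_eq_getElem hc', vvec_succ_eq_walsh h1 h2,
      ← walsh_xor_right, ← gray_xor_gray_succ hc', xor_cancel_left]

theorem rMat_succ_mul_transpose (n : ℕ) :
    rMat (n + 1) * (rMat (n + 1))ᵀ =
      (2 ^ n : ℝ) • (1 : Matrix (Fin (2 ^ n)) (Fin (2 ^ n)) ℝ) := by
  refine Matrix.ext fun (j j' : Fin (2 ^ n)) => ?_
  simp only [mul_apply, transpose_apply, rMat_succ_apply, Matrix.smul_apply, one_apply]
  rw [Fin.sum_univ_eq_sum_range (fun i => walsh n j (gray i) * walsh n j' (gray i)),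
    Nat.add_sub_cancel, sum_range_comp_gray n (fun x => walsh n j x * walsh n j' x),
    sum_walsh_mul_walsh j.2 j'.2]
  simp [Fin.ext_iff]

theorem stmt8_general (n : ℕ) :
    IsUnit (rMat (n + 1)) ∧
    (rMat (n + 1))⁻¹ = ((2 : ℝ) ^ n)⁻¹ • (rMat (n + 1))ᵀ ∧
    rMat (n + 1) * (rMat (n + 1))ᵀ =
      ((2 : ℝ) ^ n) • (1 : Matrix (Fin (2 ^ n)) (Fin (2 ^ n)) ℝ) := by
  have horth := rMat_succ_mul_transpose n
  have hinv : rMat (n + 1) * (((2 : ℝ) ^ n)⁻¹ • (rMat (n + 1))ᵀ) = 1 := by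
    rw [Matrix.mul_smul, horth, smul_smul, inv_mul_cancel₀ (by positivity), one_smul]
  exact ⟨(isUnit_iff_isUnit_det _).2 (isUnit_det_of_right_inverse hinv), inv_eq_right_inv hinv,
    horth⟩

theorem stmt8 (n : ℕ) (hn : 1 ≤ n) :
    IsUnit (rMat (n + 1)) ∧
    (rMat (n + 1))⁻¹ = ((2 : ℝ) ^ n)⁻¹ • (rMat (n + 1))ᵀ ∧
    rMat (n + 1) * (rMat (n + 1))ᵀ =
      ((2 : ℝ) ^ n) • (1 : Matrix (Fin (2 ^ n)) (Fin (2 ^ n)) ℝ) :=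
  stmt8_general n

end
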